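/- arXiv:2108.09623 — 3 statements merged into one kernel-verified Lean document; each statement's English description precedes it below -/
import Mathlib

section
/- Let u, φ: ℝⁿ → ℝ with 0 ≤ φ ≤ 1, k ∈ ℝ, and set w₊ = (u − k)₊. Let ℓ > 1 and Φ_ℓ(τ) = |τ|^{ℓ−2}τ. Then for all x, y with u(x) ≥ u(y): Φ_ℓ(u(x) − u(y))·(w₊(x)φ(x)^q − w₊(y)φ(y)^q) ≥ Φ_ℓ(w₊(x) − w₊(y))·(w₊(x)φ(x)^q − w₊(y)φ(y)^q), where q ≥ ℓ. -/
/-!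
Write `w = (u - k)₊`. If `u y ≥ k`, truncation shifts both values by `k`, so `w x - w y = u x - u y`
and the two sides agree. Otherwise `w y = 0`, the second factor reduces to `w x φ(x)^q ≥ 0`, and
`0 ≤ w x ≤ u x - u y` together with the monotonicity of `τ ↦ τ^(ℓ-1)` on `[0, ∞)` gives the inequality.
-/

open Real Set

noncomputable def signedPow (ℓ τ : ℝ) : ℝ := |τ| ^ (ℓ - 2) * τ

lemma signedPow_of_nonneg {ℓ τ : ℝ} (hℓ : 1 < ℓ) (hτ : 0 ≤ τ) : signedPow ℓ τ = τ ^ (ℓ - 1) := by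
  rcases hτ.eq_or_lt with rfl | hτ
  · simp [signedPow, zero_rpow (by linarith : ℓ - 1 ≠ 0)]
  · rw [signedPow, abs_of_pos hτ, ← rpow_add_one hτ.ne']
    ring_nf

lemma monotoneOn_signedPow {ℓ : ℝ} (hℓ : 1 < ℓ) : MonotoneOn (signedPow ℓ) (Ici 0) := by
  intro a ha b hb hab
  rw [signedPow_of_nonneg hℓ ha, signedPow_of_nonneg hℓ hb]
  exact rpow_le_rpow ha hab (by linarith)

lemma signedPow_truncation_mul_le {ℓ k a b s t : ℝ} (hℓ : 1 < ℓ) (hba : b ≤ a) (hs : 0 ≤ s) :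
    signedPow ℓ (max (a - k) 0 - max (b - k) 0) * (max (a - k) 0 * s - max (b - k) 0 * t)
      ≤ signedPow ℓ (a - b) * (max (a - k) 0 * s - max (b - k) 0 * t) := by
  rcases le_or_gt k b with hkb | hbk
  · rw [max_eq_left (by linarith : 0 ≤ b - k), max_eq_left (by linarith : 0 ≤ a - k),
      sub_sub_sub_cancel_right]
  · rw [max_eq_right (by linarith : b - k ≤ 0), zero_mul, sub_zero, sub_zero]
    have hw : 0 ≤ max (a - k) 0 := le_max_right _ _
    have hw_le : max (a - k) 0 ≤ a - b := max_le (by linarith) (by linarith)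
    exact mul_le_mul_of_nonneg_right
      (monotoneOn_signedPow hℓ hw (hw.trans hw_le) hw_le) (mul_nonneg hw hs)

theorem stmt_9_general (n : ℕ) (ℓ q k : ℝ) (hℓ : 1 < ℓ)
    (u φ : EuclideanSpace ℝ (Fin n) → ℝ) (hφ0 : ∀ x, 0 ≤ φ x)
    (x y : EuclideanSpace ℝ (Fin n)) (hxy : u y ≤ u x) :
    (fun τ : ℝ => |τ| ^ (ℓ - 2) * τ) (u x - u y) *
        (max (u x - k) 0 * φ x ^ q - max (u y - k) 0 * φ y ^ q)
      ≥ (fun τ : ℝ => |τ| ^ (ℓ - 2) * τ) (max (u x - k) 0 - max (u y - k) 0) *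
        (max (u x - k) 0 * φ x ^ q - max (u y - k) 0 * φ y ^ q) :=
  signedPow_truncation_mul_le hℓ hxy (rpow_nonneg (hφ0 x) q)

theorem stmt_9 (n : ℕ) (ℓ q k : ℝ) (hℓ : 1 < ℓ) (hq : ℓ ≤ q)
    (u φ : EuclideanSpace ℝ (Fin n) → ℝ) (hφ0 : ∀ x, 0 ≤ φ x) (hφ1 : ∀ x, φ x ≤ 1)
    (x y : EuclideanSpace ℝ (Fin n)) (hxy : u y ≤ u x) :
    (fun τ : ℝ => |τ| ^ (ℓ - 2) * τ) (u x - u y) *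
        (max (u x - k) 0 * φ x ^ q - max (u y - k) 0 * φ y ^ q)
      ≥ (fun τ : ℝ => |τ| ^ (ℓ - 2) * τ) (max (u x - k) 0 - max (u y - k) 0) *
        (max (u x - k) 0 * φ x ^ q - max (u y - k) 0 * φ y ^ q) :=
  stmt_9_general n ℓ q k hℓ u φ hφ0 x y hxy
end

section
/- Let ℓ > 1, q ≥ ℓ, and let w, φ: ℝⁿ → [0,∞) with 0 ≤ φ ≤ 1. Then there is a constant c > 0 depending only on ℓ and q such that for all x, y ∈ ℝⁿ, Φ_ℓ(w(x) − w(y))·(w(x)φ(x)^q − w(y)φ(y)^q) ≥ |w(x) − w(y)|^ℓ·(φ(x)^q + φ(y)^q)/4 − c·|φ(x) − φ(y)|^ℓ·(w(x) + w(y))^ℓ, where Φ_ℓ(τ) = |τ|^{ℓ−2}τ. -/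
/-!
Write `Φ τ = |τ| ^ (ℓ - 2) * τ`, `a = w x`, `b = w y`, `s = φ x`, `t = φ y`, and by symmetry
let `t ≤ s`. Then
`Φ(a - b) (a s^q - b t^q) = |a - b|^ℓ (s^q + t^q) / 2 + Φ(a - b) (a + b) (s^q - t^q) / 2`.
The second term is at least `-|a - b|^(ℓ-1) (a + b) q s^(q-1) (s - t) / 2` by convexity of
`x ↦ x^q`, and Young's inequality with exponents `ℓ / (ℓ - 1)` and `ℓ` splits this product into
`|a - b|^ℓ s^((q-1)ℓ/(ℓ-1)) / 4 ≤ |a - b|^ℓ s^q / 4` (as `q ≥ ℓ` and `s ≤ 1`) plus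
`(2q)^ℓ (s - t)^ℓ (a + b)^ℓ`.
-/

open Real

lemma rpow_sub_rpow_le_mul_rpow_sub_one_mul {q s t : ℝ} (hq : 1 ≤ q) (ht : 0 ≤ t) (hts : t ≤ s) :
    s ^ q - t ^ q ≤ q * s ^ (q - 1) * (s - t) := by
  rcases hts.eq_or_lt with rfl | hlt
  · simp
  have hslope := (convexOn_rpow hq).slope_le_of_hasDerivAt ht (ht.trans hlt.le) hlt
    (hasDerivAt_rpow_const (Or.inr hq))
  rwa [slope_def_field, div_le_iff₀ (sub_pos.2 hlt)] at hslope

lemma mul_le_rpow_div_four_add_four_mul_rpow {p q a b : ℝ} (hpq : p.HolderConjugate q)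
    (ha : 0 ≤ a) (hb : 0 ≤ b) : a * b ≤ a ^ p / 4 + (4 * b) ^ q := by
  have hyoung := young_inequality_of_nonneg (div_nonneg ha zero_le_four)
    (mul_nonneg zero_le_four hb) hpq
  have hfour : (4 : ℝ) ≤ 4 ^ p := by
    simpa using rpow_le_rpow_of_exponent_le (by norm_num : (1 : ℝ) ≤ 4) hpq.lt.le
  have hfirst : (a / 4) ^ p / p ≤ a ^ p / 4 := by
    rw [div_rpow ha zero_le_four, div_div]
    gcongr
    nlinarith [hpq.lt]
  have hsecond : (4 * b) ^ q / q ≤ (4 * b) ^ q :=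
    div_le_self (by positivity) hpq.symm.lt.le
  calc a * b = a / 4 * (4 * b) := by ring
    _ ≤ a ^ p / 4 + (4 * b) ^ q := by linarith

lemma abs_rpow_sub_two_mul_sq {ℓ : ℝ} (hℓ : ℓ ≠ 0) (τ : ℝ) :
    |τ| ^ (ℓ - 2) * τ ^ 2 = |τ| ^ ℓ := by
  rcases eq_or_ne τ 0 with rfl | hτ
  · simp [zero_rpow hℓ]
  rw [← sq_abs, ← rpow_natCast, ← rpow_add (abs_pos.2 hτ)]
  norm_num

lemma neg_abs_rpow_sub_one_le_abs_rpow_sub_two_mul (ℓ τ : ℝ) :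
    -(|τ| ^ (ℓ - 1)) ≤ |τ| ^ (ℓ - 2) * τ := by
  rcases eq_or_ne τ 0 with rfl | hτ
  · simpa using rpow_nonneg le_rfl (ℓ - 1)
  calc -(|τ| ^ (ℓ - 1)) = |τ| ^ (ℓ - 2) * -|τ| := by
        rw [mul_neg, ← rpow_add_one (abs_ne_zero.2 hτ)]
        ring_nf
    _ ≤ |τ| ^ (ℓ - 2) * τ := by gcongr; exact neg_abs_le τ

lemma rpow_sub_one_mul_mul_sub_rpow_le {ℓ q u m s t : ℝ} (hℓ : 1 < ℓ) (hq : ℓ ≤ q)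
    (hu : 0 ≤ u) (hm : 0 ≤ m) (ht : 0 ≤ t) (hts : t ≤ s) (hs : s ≤ 1) :
    u ^ (ℓ - 1) * m * (s ^ q - t ^ q) / 2
      ≤ u ^ ℓ * s ^ q / 4 + (2 * q) ^ ℓ * (s - t) ^ ℓ * m ^ ℓ := by
  have hs0 : 0 ≤ s := ht.trans hts
  have hℓ1 : 0 < ℓ - 1 := sub_pos.2 hℓ
  have hpow : (u ^ (ℓ - 1) * s ^ (q - 1)) ^ ℓ.conjExponent ≤ u ^ ℓ * s ^ q := by
    rw [mul_rpow (by positivity) (by positivity), ← rpow_mul hu, ← rpow_mul hs0,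
      conjExponent, mul_div_cancel₀ _ hℓ1.ne']
    refine mul_le_mul_of_nonneg_left (rpow_le_rpow_of_exponent_ge' hs0 hs (by linarith) ?_)
      (by positivity)
    rw [mul_div_assoc', le_div_iff₀ hℓ1]
    nlinarith
  calc u ^ (ℓ - 1) * m * (s ^ q - t ^ q) / 2
      ≤ u ^ (ℓ - 1) * m * (q * s ^ (q - 1) * (s - t)) / 2 := by
        gcongr
        exact rpow_sub_rpow_le_mul_rpow_sub_one_mul (by linarith) ht hts
    _ = (u ^ (ℓ - 1) * s ^ (q - 1)) * (q / 2 * (m * (s - t))) := by ring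
    _ ≤ (u ^ (ℓ - 1) * s ^ (q - 1)) ^ ℓ.conjExponent / 4 + (4 * (q / 2 * (m * (s - t)))) ^ ℓ :=
        mul_le_rpow_div_four_add_four_mul_rpow (HolderConjugate.conjExponent hℓ).symm
          (by positivity) (mul_nonneg (by linarith) (mul_nonneg hm (sub_nonneg.2 hts)))
    _ ≤ u ^ ℓ * s ^ q / 4 + (2 * q) ^ ℓ * (s - t) ^ ℓ * m ^ ℓ := by
        rw [show 4 * (q / 2 * (m * (s - t))) = 2 * q * (s - t) * m by ring,
          mul_rpow (by nlinarith) hm, mul_rpow (by linarith) (sub_nonneg.2 hts)]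
        gcongr

lemma le_abs_rpow_sub_two_mul_mul_sub_of_le {ℓ q a b s t : ℝ} (hℓ : 1 < ℓ) (hq : ℓ ≤ q)
    (hab : 0 ≤ a + b) (ht : 0 ≤ t) (hts : t ≤ s) (hs : s ≤ 1) :
    |a - b| ^ ℓ * (s ^ q + t ^ q) / 4 - (2 * q) ^ ℓ * |s - t| ^ ℓ * (a + b) ^ ℓ
      ≤ |a - b| ^ (ℓ - 2) * (a - b) * (a * s ^ q - b * t ^ q) := by
  have hsplit : |a - b| ^ (ℓ - 2) * (a - b) * (a * s ^ q - b * t ^ q)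
      = |a - b| ^ (ℓ - 2) * (a - b) ^ 2 * (s ^ q + t ^ q) / 2
        + |a - b| ^ (ℓ - 2) * (a - b) * ((a + b) * (s ^ q - t ^ q)) / 2 := by ring
  have hmono : 0 ≤ (a + b) * (s ^ q - t ^ q) :=
    mul_nonneg hab (sub_nonneg.2 (rpow_le_rpow ht hts (by linarith)))
  have hcross := mul_le_mul_of_nonneg_right
    (neg_abs_rpow_sub_one_le_abs_rpow_sub_two_mul ℓ (a - b)) hmono
  have hyoung := rpow_sub_one_mul_mul_sub_rpow_le hℓ hq (abs_nonneg (a - b)) hab ht hts hs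
  have ht' : 0 ≤ |a - b| ^ ℓ * t ^ q := by positivity
  rw [hsplit, abs_rpow_sub_two_mul_sq (by linarith), abs_of_nonneg (sub_nonneg.2 hts)]
  linarith

lemma le_abs_rpow_sub_two_mul_mul_sub {ℓ q a b s t : ℝ} (hℓ : 1 < ℓ) (hq : ℓ ≤ q)
    (hab : 0 ≤ a + b) (hs0 : 0 ≤ s) (ht0 : 0 ≤ t) (hs1 : s ≤ 1) (ht1 : t ≤ 1) :
    |a - b| ^ ℓ * (s ^ q + t ^ q) / 4 - (2 * q) ^ ℓ * |s - t| ^ ℓ * (a + b) ^ ℓ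
      ≤ |a - b| ^ (ℓ - 2) * (a - b) * (a * s ^ q - b * t ^ q) := by
  rcases le_total t s with hts | hst
  · exact le_abs_rpow_sub_two_mul_mul_sub_of_le hℓ hq hab ht0 hts hs1
  · have h := le_abs_rpow_sub_two_mul_mul_sub_of_le hℓ hq (by linarith) hs0 hst ht1
      (a := b) (b := a)
    rw [abs_sub_comm b, abs_sub_comm t, add_comm b, add_comm (t ^ q)] at h
    linarith

theorem stmt_10 (n : ℕ) (ℓ q : ℝ) (hℓ : 1 < ℓ) (hq : ℓ ≤ q) :
    ∃ c : ℝ, 0 < c ∧ ∀ w φ : EuclideanSpace ℝ (Fin n) → ℝ,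
      (∀ x, 0 ≤ w x) → (∀ x, 0 ≤ φ x) → (∀ x, φ x ≤ 1) →
      ∀ x y,
        (fun τ : ℝ => |τ| ^ (ℓ - 2) * τ) (w x - w y) *
            (w x * φ x ^ q - w y * φ y ^ q)
          ≥ |w x - w y| ^ ℓ * (φ x ^ q + φ y ^ q) / 4
            - c * |φ x - φ y| ^ ℓ * (w x + w y) ^ ℓ := by
  exact ⟨(2 * q) ^ ℓ, rpow_pos_of_pos (by linarith) ℓ, fun w φ hw hφ0 hφ1 x y =>
    le_abs_rpow_sub_two_mul_mul_sub hℓ hq (add_nonneg (hw x) (hw y)) (hφ0 x) (hφ0 y)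
      (hφ1 x) (hφ1 y)⟩
end

section
/- Let s ∈ (0,1), p ≥ 1 with sp ≤ n, and let B_r ⊂ ℝⁿ be a ball. For any f ∈ W^{s,p}(B_r) with support of f contained in a measurable set of measure |supp f|, one has (1/|B_r|)∫_{B_r}|f/r^s|^p dx ≤ c·(|supp f|/|B_r|)^{sp/n} · (1/|B_r|)∫_{B_r}∫_{B_r} |f(x)−f(y)|^p/|x−y|^{n+sp} dxdy + c·|(f)_{B_r}/r^s|^p, where c depends only on n, s, p. -/
/-!
Write `B = B_r(x₀)` and `A = |supp f ∩ B|`.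

If `A ≤ |B| / 2`, choose `ρ ≤ r` with `|B_ρ| = 2A`. For `x ∈ B` the set `B_{2ρ}(x) ∩ B` contains a
ball of radius `ρ`, so at least measure `A` of it lies outside `supp f`; there the Gagliardo
integrand at `(x, y)` is at least `|f x|^p / (2ρ)^(n+sp)`. Integrating in `x` gives
`A ∫_B |f|^p ≤ (2ρ)^(n+sp) [f]^p ≈ A^(1+sp/n) [f]^p`, which is the claim without the average term.

If `A > |B| / 2`, the factor `(|supp f| / |B|)^(sp/n)` is bounded below and the claim is a crude
Poincaré inequality: `|f x - (f)_B|^p ≤ ⨍_B |f x - f y|^p dy` by Jensen, and `|x - y| < 2r` on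
`B × B`.
-/

open Real MeasureTheory Metric Set Module
open scoped ENNReal

/-- With `α = n + s p` this is the `p`-th power of the Gagliardo seminorm of `W^{s,p}`. -/
noncomputable def gagliardoEnergy {E : Type*} [NormedAddCommGroup E] [MeasurableSpace E] (f : E → ℝ)
    (p α : ℝ) (μ : Measure E) : ℝ≥0∞ :=
  ∫⁻ x, ∫⁻ y, ENNReal.ofReal (|f x - f y| ^ p / ‖x - y‖ ^ α) ∂μ ∂μ

theorem exists_ball_subset_ball_inter_ball {E : Type*} [NormedAddCommGroup E] [NormedSpace ℝ E]
    {x₀ x : E} {r ρ : ℝ} (hx : x ∈ ball x₀ r) (hρ : 0 < ρ) (hρr : ρ ≤ r) :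
    ∃ z, ball z ρ ⊆ ball x (2 * ρ) ∩ ball x₀ r := by
  rw [mem_ball] at hx
  rcases le_or_gt (dist x x₀) ρ with hd | hd
  · refine ⟨x₀, subset_inter (ball_subset_ball' ?_) (ball_subset_ball hρr)⟩
    rw [dist_comm]
    linarith
  · have hd0 : 0 < dist x x₀ := hρ.trans hd
    refine ⟨AffineMap.lineMap x x₀ (ρ / dist x x₀),
      subset_inter (ball_subset_ball' ?_) (ball_subset_ball' ?_)⟩
    · rw [dist_lineMap_left, Real.norm_of_nonneg (by positivity), div_mul_cancel₀ _ hd0.ne']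
      linarith
    · rw [dist_lineMap_right, Real.norm_of_nonneg (by rw [sub_nonneg, div_le_one hd0]; linarith),
        sub_mul, one_mul, div_mul_cancel₀ _ hd0.ne']
      linarith

theorem ENNReal.ofReal_abs_add_rpow_le {p : ℝ} (hp : 1 ≤ p) (a b : ℝ) :
    ENNReal.ofReal (|a + b| ^ p) ≤
      2 ^ (p - 1) * (ENNReal.ofReal (|a| ^ p) + ENNReal.ofReal (|b| ^ p)) := by
  have hp0 : 0 ≤ p := by linarith
  simp only [← ENNReal.ofReal_rpow_of_nonneg (abs_nonneg _) hp0]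
  calc ENNReal.ofReal |a + b| ^ p ≤ (ENNReal.ofReal |a| + ENNReal.ofReal |b|) ^ p := by
        rw [← ENNReal.ofReal_add (abs_nonneg _) (abs_nonneg _)]
        gcongr
        exact abs_add_le a b
    _ ≤ _ := ENNReal.rpow_add_le_mul_rpow_add_rpow _ _ hp

theorem ENNReal.rpow_lintegral_le_lintegral_rpow {α : Type*} [MeasurableSpace α]
    {ν : Measure α} [IsProbabilityMeasure ν] {p : ℝ} (hp : 1 ≤ p) {g : α → ℝ≥0∞}
    (hg : AEMeasurable g ν) :
    (∫⁻ x, g x ∂ν) ^ p ≤ ∫⁻ x, g x ^ p ∂ν := by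
  rcases hp.eq_or_lt with rfl | hp
  · simp
  have hHolder := ENNReal.lintegral_mul_le_Lp_mul_Lq ν (Real.HolderConjugate.conjExponent hp) hg
    aemeasurable_const (g := fun _ ↦ 1)
  simp only [Pi.mul_apply, mul_one, ENNReal.one_rpow, lintegral_const, measure_univ] at hHolder
  calc (∫⁻ x, g x ∂ν) ^ p ≤ ((∫⁻ x, g x ^ p ∂ν) ^ (1 / p)) ^ p := by gcongr
    _ = ∫⁻ x, g x ^ p ∂ν := by
      rw [← ENNReal.rpow_mul, one_div_mul_cancel (by linarith), ENNReal.rpow_one]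

section Probability

variable {α : Type*} [MeasurableSpace α] {ν : Measure α} [IsProbabilityMeasure ν] {p : ℝ}
  {f : α → ℝ}

theorem integrable_of_lintegral_lintegral_sub_rpow_ne_top (hp : 1 ≤ p) (hf : Measurable f)
    (hJ : ∫⁻ x, ∫⁻ y, ENNReal.ofReal (|f x - f y| ^ p) ∂ν ∂ν ≠ ∞) : Integrable f ν := by
  have hp0 : 0 ≤ p := by linarith
  obtain ⟨x, hx⟩ := (ae_lt_top (by fun_prop) hJ).exists
  have hLp : ∫⁻ y, ENNReal.ofReal (|f y| ^ p) ∂ν < ∞ := by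
    calc ∫⁻ y, ENNReal.ofReal (|f y| ^ p) ∂ν
        ≤ ∫⁻ y, 2 ^ (p - 1) *
            (ENNReal.ofReal (|f x - f y| ^ p) + ENNReal.ofReal (|f x| ^ p)) ∂ν :=
          lintegral_mono fun y ↦ by
            simpa [abs_sub_comm] using ENNReal.ofReal_abs_add_rpow_le hp (f y - f x) (f x)
      _ < ∞ := by
        rw [lintegral_const_mul' _ _ (by finiteness), lintegral_add_right _ measurable_const,
          lintegral_const, measure_univ, mul_one]
        exact ENNReal.mul_lt_top (by finiteness) (ENNReal.add_lt_top.2 ⟨hx, by simp⟩)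
  refine MemLp.integrable (q := ENNReal.ofReal p) (ENNReal.one_le_ofReal.2 hp)
    ⟨hf.aestronglyMeasurable, ?_⟩
  rw [eLpNorm_lt_top_iff_lintegral_rpow_enorm_lt_top (by simp; linarith) (by simp)]
  simpa [ENNReal.toReal_ofReal hp0, Real.enorm_eq_ofReal_abs,
    ENNReal.ofReal_rpow_of_nonneg (abs_nonneg _) hp0] using hLp

theorem ofReal_abs_sub_integral_rpow_le (hp : 1 ≤ p) (hf : Integrable f ν) (x : α) :
    ENNReal.ofReal (|f x - ∫ y, f y ∂ν| ^ p) ≤ ∫⁻ y, ENNReal.ofReal (|f x - f y| ^ p) ∂ν := by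
  have hp0 : 0 ≤ p := by linarith
  have hmean : f x - ∫ y, f y ∂ν = ∫ y, (f x - f y) ∂ν := by
    rw [integral_sub (integrable_const _) hf, integral_const, probReal_univ, one_smul]
  calc ENNReal.ofReal (|f x - ∫ y, f y ∂ν| ^ p)
      = ‖∫ y, (f x - f y) ∂ν‖ₑ ^ p := by
        rw [hmean, Real.enorm_eq_ofReal_abs, ENNReal.ofReal_rpow_of_nonneg (abs_nonneg _) hp0]
    _ ≤ (∫⁻ y, ‖f x - f y‖ₑ ∂ν) ^ p := by gcongr; exact enorm_integral_le_lintegral_enorm _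
    _ ≤ ∫⁻ y, ‖f x - f y‖ₑ ^ p ∂ν := ENNReal.rpow_lintegral_le_lintegral_rpow hp (by fun_prop)
    _ = ∫⁻ y, ENNReal.ofReal (|f x - f y| ^ p) ∂ν := by
        simp only [Real.enorm_eq_ofReal_abs, ENNReal.ofReal_rpow_of_nonneg (abs_nonneg _) hp0]

theorem lintegral_rpow_le_lintegral_lintegral_sub_rpow_add (hp : 1 ≤ p) (hf : Measurable f) :
    ∫⁻ x, ENNReal.ofReal (|f x| ^ p) ∂ν ≤
      2 ^ (p - 1) * (∫⁻ x, ∫⁻ y, ENNReal.ofReal (|f x - f y| ^ p) ∂ν ∂ν +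
        ENNReal.ofReal (|∫ x, f x ∂ν| ^ p)) := by
  by_cases hJ : ∫⁻ x, ∫⁻ y, ENNReal.ofReal (|f x - f y| ^ p) ∂ν ∂ν = ∞
  · simp [hJ]
  have hf_int := integrable_of_lintegral_lintegral_sub_rpow_ne_top hp hf hJ
  calc ∫⁻ x, ENNReal.ofReal (|f x| ^ p) ∂ν
      ≤ ∫⁻ x, 2 ^ (p - 1) * (ENNReal.ofReal (|f x - ∫ y, f y ∂ν| ^ p) +
          ENNReal.ofReal (|∫ y, f y ∂ν| ^ p)) ∂ν :=
        lintegral_mono fun x ↦ by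
          simpa using ENNReal.ofReal_abs_add_rpow_le hp (f x - ∫ y, f y ∂ν) (∫ y, f y ∂ν)
    _ = 2 ^ (p - 1) * (∫⁻ x, ENNReal.ofReal (|f x - ∫ y, f y ∂ν| ^ p) ∂ν +
          ENNReal.ofReal (|∫ y, f y ∂ν| ^ p)) := by
        rw [lintegral_const_mul' _ _ (by finiteness), lintegral_add_right _ measurable_const,
          lintegral_const, measure_univ, mul_one]
    _ ≤ _ := by
        gcongr with x
        exact ofReal_abs_sub_integral_rpow_le hp hf_int x

end Probability

section AddHaar

variable {E : Type*} [NormedAddCommGroup E] [NormedSpace ℝ E] [MeasurableSpace E] [BorelSpace E]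
  [FiniteDimensional ℝ E] {μ : Measure E} [μ.IsAddHaarMeasure] {f : E → ℝ} {p α r : ℝ} {x₀ : E}

theorem measure_ball_mul_rpow_inv_finrank (hd : 0 < finrank ℝ E) (y x : E) (hr : 0 < r)
    {t : ℝ} (ht : 0 < t) :
    μ (ball y (r * t ^ (finrank ℝ E : ℝ)⁻¹)) = ENNReal.ofReal t * μ (ball x r) := by
  rw [Measure.addHaar_ball_of_pos μ y (by positivity), Measure.addHaar_ball_of_pos μ x hr,
    mul_pow, ← rpow_natCast (t ^ _), ← rpow_mul ht.le, inv_mul_cancel₀ (by exact_mod_cast hd.ne'),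
    rpow_one, ENNReal.ofReal_mul (by positivity)]
  ring

theorem ofReal_two_mul_rpow_mul_inv_measure_ball (hr : 0 < r) (σ : ℝ) :
    ENNReal.ofReal ((2 * r) ^ ((finrank ℝ E : ℝ) + σ)) * (μ (ball x₀ r))⁻¹ =
      ENNReal.ofReal (2 ^ ((finrank ℝ E : ℝ) + σ)) / μ (ball (0 : E) 1) *
        ENNReal.ofReal (r ^ σ) := by
  have hrd0 : ENNReal.ofReal (r ^ finrank ℝ E) ≠ 0 := by simp [hr]
  rw [Measure.addHaar_ball_of_pos μ x₀ hr, mul_rpow zero_le_two hr.le, rpow_add hr,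
    rpow_natCast, ENNReal.ofReal_mul (by positivity), ENNReal.ofReal_mul (by positivity),
    ENNReal.mul_inv (Or.inl hrd0) (Or.inl ENNReal.ofReal_ne_top), div_eq_mul_inv]
  calc _ = ENNReal.ofReal (2 ^ ((finrank ℝ E : ℝ) + σ)) * (μ (ball 0 1))⁻¹ *
        ENNReal.ofReal (r ^ σ) *
          (ENNReal.ofReal (r ^ finrank ℝ E) * (ENNReal.ofReal (r ^ finrank ℝ E))⁻¹) := by ring
    _ = _ := by rw [ENNReal.mul_inv_cancel hrd0 ENNReal.ofReal_ne_top, mul_one]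

theorem ofReal_rpow_mul_measure_support_inter_ball_le (hf : Measurable f) (hp : 0 < p)
    (hα : 0 ≤ α) {x : E} (hx : x ∈ ball x₀ r) {ρ : ℝ} (hρ : 0 < ρ) (hρr : ρ ≤ r)
    (hρA : 2 * μ (Function.support f ∩ ball x₀ r) ≤ μ (ball (0 : E) ρ)) :
    ENNReal.ofReal (|f x| ^ p) * μ (Function.support f ∩ ball x₀ r) ≤
      ENNReal.ofReal ((2 * ρ) ^ α) *
        ∫⁻ y in ball x₀ r, ENNReal.ofReal (|f x - f y| ^ p / ‖x - y‖ ^ α) ∂μ := by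
  set A := μ (Function.support f ∩ ball x₀ r)
  rcases eq_or_ne (f x) 0 with hfx | hfx
  · simp [hfx, zero_rpow hp.ne']
  obtain ⟨z, hz⟩ := exists_ball_subset_ball_inter_ball hx hρ hρr
  set S := (ball x (2 * ρ) ∩ ball x₀ r) \ (Function.support f ∩ ball x₀ r)
  have hA_ne_top : A ≠ ∞ := ((measure_mono inter_subset_right).trans_lt measure_ball_lt_top).ne
  have hAS : A ≤ μ S := by
    refine le_trans (ENNReal.le_sub_of_add_le_right hA_ne_top ?_) le_measure_sdiff
    calc A + A = 2 * A := (two_mul A).symm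
      _ ≤ μ (ball z ρ) := by rwa [Measure.addHaar_ball_center]
      _ ≤ μ (ball x (2 * ρ) ∩ ball x₀ r) := measure_mono hz
  have hkernel : ∀ y ∈ S, ENNReal.ofReal (|f x| ^ p / (2 * ρ) ^ α) ≤
      ENNReal.ofReal (|f x - f y| ^ p / ‖x - y‖ ^ α) := by
    rintro y ⟨⟨hyx, hyB⟩, hyA⟩
    have hfy : f y = 0 := by simpa [hyB] using hyA
    have hxy : 0 < ‖x - y‖ := norm_pos_iff.2 (sub_ne_zero.2 fun h ↦ hfx (h ▸ hfy))
    rw [hfy, sub_zero]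
    gcongr
    rw [← dist_eq_norm, dist_comm]
    exact (mem_ball.1 hyx).le
  have hS : MeasurableSet S := (measurableSet_ball.inter measurableSet_ball).diff
    ((measurableSet_support hf).inter measurableSet_ball)
  calc ENNReal.ofReal (|f x| ^ p) * A
      = ENNReal.ofReal ((2 * ρ) ^ α) * (ENNReal.ofReal (|f x| ^ p / (2 * ρ) ^ α) * A) := by
        rw [← mul_assoc, ← ENNReal.ofReal_mul (by positivity), mul_div_cancel₀ _ (by positivity)]
    _ ≤ ENNReal.ofReal ((2 * ρ) ^ α) *
          ∫⁻ y in S, ENNReal.ofReal (|f x| ^ p / (2 * ρ) ^ α) ∂μ := by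
        rw [setLIntegral_const]
        gcongr
    _ ≤ ENNReal.ofReal ((2 * ρ) ^ α) *
          ∫⁻ y in ball x₀ r, ENNReal.ofReal (|f x - f y| ^ p / ‖x - y‖ ^ α) ∂μ := by
        gcongr 1
        exact (setLIntegral_mono' hS hkernel).trans (lintegral_mono_set fun y hy ↦ hy.1.2)

theorem lintegral_rpow_mul_measure_support_inter_ball_le (hf : Measurable f) (hp : 0 < p)
    (hα : 0 ≤ α) {ρ : ℝ} (hρ : 0 < ρ) (hρr : ρ ≤ r)
    (hρA : 2 * μ (Function.support f ∩ ball x₀ r) ≤ μ (ball (0 : E) ρ)) :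
    (∫⁻ x in ball x₀ r, ENNReal.ofReal (|f x| ^ p) ∂μ) * μ (Function.support f ∩ ball x₀ r) ≤
      ENNReal.ofReal ((2 * ρ) ^ α) * gagliardoEnergy f p α (μ.restrict (ball x₀ r)) := by
  have hA_ne_top : μ (Function.support f ∩ ball x₀ r) ≠ ∞ :=
    ((measure_mono inter_subset_right).trans_lt measure_ball_lt_top).ne
  rw [gagliardoEnergy, ← lintegral_mul_const' _ _ hA_ne_top,
    ← lintegral_const_mul' _ _ ENNReal.ofReal_ne_top]
  exact setLIntegral_mono' measurableSet_ball fun x hx ↦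
    ofReal_rpow_mul_measure_support_inter_ball_le hf hp hα hx hρ hρr hρA

theorem lintegral_rpow_mul_measure_support_inter_ball_le_of_two_mul_le
    (hd : 0 < finrank ℝ E) (hf : Measurable f) (hp : 0 < p) {σ : ℝ} (hσ : 0 ≤ σ) (hr : 0 < r)
    (hA : 2 * μ (Function.support f ∩ ball x₀ r) ≤ μ (ball x₀ r)) :
    (∫⁻ x in ball x₀ r, ENNReal.ofReal (|f x| ^ p) ∂μ) * μ (Function.support f ∩ ball x₀ r) ≤
      ENNReal.ofReal ((2 * r) ^ ((finrank ℝ E : ℝ) + σ)) *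
        (2 * (μ (Function.support f ∩ ball x₀ r) / μ (ball x₀ r))) ^ (1 + σ / finrank ℝ E) *
        gagliardoEnergy f p (finrank ℝ E + σ) (μ.restrict (ball x₀ r)) := by
  set d := finrank ℝ E
  set V := μ (ball x₀ r)
  set A := μ (Function.support f ∩ ball x₀ r)
  rcases eq_or_ne A 0 with hA0 | hA0
  · simp [hA0]
  have hV0 : V ≠ 0 := (measure_ball_pos μ x₀ hr).ne'
  have hVt : V ≠ ∞ := measure_ball_lt_top.ne
  have htop : 2 * (A / V) ≠ ∞ := ENNReal.mul_ne_top (by simp)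
    (ENNReal.div_lt_top (ne_top_of_le_ne_top hVt (measure_mono inter_subset_right)) hV0).ne
  set t := (2 * (A / V)).toReal
  have ht : ENNReal.ofReal t = 2 * (A / V) := ENNReal.ofReal_toReal htop
  have ht0 : 0 < t := ENNReal.toReal_pos (by simp [hA0, hVt]) htop
  have ht1 : t ≤ 1 := by
    rw [← ENNReal.ofReal_le_one, ht, ← mul_div_assoc, ENNReal.div_le_iff hV0 hVt, one_mul]
    exact hA
  have hd0 : (0 : ℝ) < d := Nat.cast_pos.2 hd
  set ρ := r * t ^ (d : ℝ)⁻¹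
  have hρr : ρ ≤ r := mul_le_of_le_one_right hr.le (rpow_le_one ht0.le ht1 (by positivity))
  have hball : 2 * A ≤ μ (ball 0 ρ) := by
    rw [measure_ball_mul_rpow_inv_finrank hd 0 x₀ hr ht0, ht, mul_assoc,
      ENNReal.div_mul_cancel hV0 hVt]
  have hscale : (2 * ρ) ^ ((d : ℝ) + σ) = (2 * r) ^ ((d : ℝ) + σ) * t ^ (1 + σ / d) := by
    rw [← mul_assoc, mul_rpow (by positivity) (by positivity), ← rpow_mul ht0.le, inv_mul_eq_div,
      add_div, div_self hd0.ne']
  calc _ ≤ ENNReal.ofReal ((2 * ρ) ^ ((d : ℝ) + σ)) *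
        gagliardoEnergy f p (d + σ) (μ.restrict (ball x₀ r)) :=
        lintegral_rpow_mul_measure_support_inter_ball_le hf hp (by positivity) (by positivity)
          hρr hball
    _ = _ := by
        rw [hscale, ENNReal.ofReal_mul (by positivity), ← ENNReal.ofReal_rpow_of_pos ht0, ht]

theorem laverage_rpow_le_of_two_mul_measure_support_inter_ball_le
    (hd : 0 < finrank ℝ E) (hf : Measurable f) (hp : 0 < p) {σ : ℝ} (hσ : 0 ≤ σ) (hr : 0 < r)
    (hA : 2 * μ (Function.support f ∩ ball x₀ r) ≤ μ (ball x₀ r)) :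
    (μ (ball x₀ r))⁻¹ * ∫⁻ x in ball x₀ r, ENNReal.ofReal (|f x| ^ p) ∂μ ≤
      2 ^ (1 + σ / finrank ℝ E) *
        (μ (Function.support f ∩ ball x₀ r) / μ (ball x₀ r)) ^ (σ / finrank ℝ E) *
        (ENNReal.ofReal ((2 * r) ^ ((finrank ℝ E : ℝ) + σ)) * (μ (ball x₀ r))⁻¹) *
        ((μ (ball x₀ r))⁻¹ * gagliardoEnergy f p (finrank ℝ E + σ) (μ.restrict (ball x₀ r))) := by
  set θ := σ / finrank ℝ E
  set V := μ (ball x₀ r)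
  set A := μ (Function.support f ∩ ball x₀ r)
  set L := ∫⁻ x in ball x₀ r, ENNReal.ofReal (|f x| ^ p) ∂μ
  set I := gagliardoEnergy f p (finrank ℝ E + σ) (μ.restrict (ball x₀ r))
  have hVt : V ≠ ∞ := measure_ball_lt_top.ne
  have hAt : A ≠ ∞ := ne_top_of_le_ne_top hVt (measure_mono inter_subset_right)
  rcases eq_or_ne A 0 with hA0 | hA0
  · have hf0 : ∀ᵐ x ∂μ.restrict (ball x₀ r), f x = 0 := by
      rw [ae_iff, Measure.restrict_apply' measurableSet_ball]
      exact hA0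
    have hL : L = 0 :=
      (lintegral_congr_ae (hf0.mono fun x hx ↦ by simp [hx, zero_rpow hp.ne'])).trans
        lintegral_zero
    simp [hL]
  have hAV0 : A / V ≠ 0 := ENNReal.div_ne_zero.2 ⟨hA0, hVt⟩
  have hAVt : A / V ≠ ∞ := (ENNReal.div_lt_top hAt (measure_ball_pos μ x₀ hr).ne').ne
  have hL : L ≤ 2 ^ (1 + θ) * (A / V) ^ θ *
      ENNReal.ofReal ((2 * r) ^ ((finrank ℝ E : ℝ) + σ)) * V⁻¹ * I := by
    refine (ENNReal.mul_le_mul_iff_left hA0 hAt).1 ?_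
    calc L * A ≤ ENNReal.ofReal ((2 * r) ^ ((finrank ℝ E : ℝ) + σ)) * (2 * (A / V)) ^ (1 + θ) * I :=
          lintegral_rpow_mul_measure_support_inter_ball_le_of_two_mul_le hd hf hp hσ hr hA
      _ = _ := by
          rw [ENNReal.mul_rpow_of_nonneg _ _ (by positivity), ENNReal.rpow_add _ _ hAV0 hAVt,
            ENNReal.rpow_one, ENNReal.div_eq_inv_mul]
          ring
  calc V⁻¹ * L ≤ V⁻¹ * (2 ^ (1 + θ) * (A / V) ^ θ *
        ENNReal.ofReal ((2 * r) ^ ((finrank ℝ E : ℝ) + σ)) * V⁻¹ * I) := by gcongr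
    _ = _ := by ring

theorem laverage_rpow_le_gagliardoEnergy_add (hp : 1 ≤ p) (hα : 0 ≤ α) (hf : Measurable f)
    (hr : 0 < r) :
    (μ (ball x₀ r))⁻¹ * ∫⁻ x in ball x₀ r, ENNReal.ofReal (|f x| ^ p) ∂μ ≤
      2 ^ (p - 1) * (ENNReal.ofReal ((2 * r) ^ α) * (μ (ball x₀ r))⁻¹ *
        ((μ (ball x₀ r))⁻¹ * gagliardoEnergy f p α (μ.restrict (ball x₀ r))) +
        ENNReal.ofReal (|⨍ x in ball x₀ r, f x ∂μ| ^ p)) := by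
  set B := ball x₀ r
  set V := μ B
  have hV0 : V ≠ 0 := (measure_ball_pos μ x₀ hr).ne'
  have : IsFiniteMeasure (μ.restrict B) := isFiniteMeasure_restrict.2 measure_ball_lt_top.ne
  have : NeZero (μ.restrict B) := ⟨by rwa [Ne, Measure.restrict_eq_zero]⟩
  have hkernel : ∀ x ∈ B, ∀ y ∈ B, ENNReal.ofReal (|f x - f y| ^ p) ≤
      ENNReal.ofReal ((2 * r) ^ α) * ENNReal.ofReal (|f x - f y| ^ p / ‖x - y‖ ^ α) := by
    intro x hx y hy
    rcases eq_or_ne x y with rfl | hxy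
    · simp [zero_rpow (by linarith : p ≠ 0)]
    have hxy : 0 < ‖x - y‖ := norm_pos_iff.2 (sub_ne_zero.2 hxy)
    have hxy_le : ‖x - y‖ ≤ 2 * r := by
      rw [← dist_eq_norm]
      exact (dist_triangle_right x y x₀).trans (by linarith [mem_ball.1 hx, mem_ball.1 hy])
    rw [← ENNReal.ofReal_mul (by positivity)]
    refine ENNReal.ofReal_le_ofReal ?_
    calc |f x - f y| ^ p = ‖x - y‖ ^ α * (|f x - f y| ^ p / ‖x - y‖ ^ α) := by field_simp
      _ ≤ (2 * r) ^ α * (|f x - f y| ^ p / ‖x - y‖ ^ α) := by gcongr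
  have hJ : V⁻¹ * ∫⁻ x in B, V⁻¹ * ∫⁻ y in B, ENNReal.ofReal (|f x - f y| ^ p) ∂μ ∂μ ≤
      ENNReal.ofReal ((2 * r) ^ α) * V⁻¹ * (V⁻¹ * gagliardoEnergy f p α (μ.restrict B)) := by
    calc V⁻¹ * ∫⁻ x in B, V⁻¹ * ∫⁻ y in B, ENNReal.ofReal (|f x - f y| ^ p) ∂μ ∂μ
        ≤ V⁻¹ * ∫⁻ x in B, V⁻¹ * ∫⁻ y in B, ENNReal.ofReal ((2 * r) ^ α) *
            ENNReal.ofReal (|f x - f y| ^ p / ‖x - y‖ ^ α) ∂μ ∂μ := by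
          gcongr 1
          exact setLIntegral_mono' measurableSet_ball fun x hx ↦
            mul_le_mul_right (setLIntegral_mono' measurableSet_ball (hkernel x hx)) _
      _ = _ := by
          simp only [gagliardoEnergy, lintegral_const_mul' _ _ ENNReal.ofReal_ne_top,
            lintegral_const_mul' _ _ (ENNReal.inv_ne_top.2 hV0)]
          ring
  -- normalized, `μ.restrict B` is a probability measure and integrals against it are averages
  have hP := lintegral_rpow_le_lintegral_lintegral_sub_rpow_add
    (ν := (μ.restrict B univ)⁻¹ • μ.restrict B) hp hf
  rw [show ∫ x, f x ∂(μ.restrict B univ)⁻¹ • μ.restrict B = ⨍ x in B, f x ∂μ from rfl] at hP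
  simp only [lintegral_smul_measure, Measure.restrict_apply_univ, smul_eq_mul] at hP
  exact hP.trans (by gcongr)

theorem laverage_rpow_le_measure_support_div_rpow_mul_add (hd : 0 < finrank ℝ E)
    (hf : Measurable f) (hp : 1 ≤ p) {σ : ℝ} (hσ : 0 ≤ σ) (hr : 0 < r) :
    (μ (ball x₀ r))⁻¹ * ∫⁻ x in ball x₀ r, ENNReal.ofReal (|f x| ^ p) ∂μ ≤
      (2 ^ (1 + σ / finrank ℝ E) + 2 ^ (p - 1) * 2 ^ (σ / finrank ℝ E)) *
        ((μ (Function.support f) / μ (ball x₀ r)) ^ (σ / finrank ℝ E) *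
          (ENNReal.ofReal ((2 * r) ^ ((finrank ℝ E : ℝ) + σ)) * (μ (ball x₀ r))⁻¹ *
            ((μ (ball x₀ r))⁻¹ * gagliardoEnergy f p (finrank ℝ E + σ) (μ.restrict (ball x₀ r)))) +
          ENNReal.ofReal (|⨍ x in ball x₀ r, f x ∂μ| ^ p)) := by
  set θ := σ / finrank ℝ E
  set V := μ (ball x₀ r)
  set A := μ (Function.support f ∩ ball x₀ r)
  set X := (μ (Function.support f) / V) ^ θ
  set K := ENNReal.ofReal ((2 * r) ^ ((finrank ℝ E : ℝ) + σ)) * V⁻¹ *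
    (V⁻¹ * gagliardoEnergy f p (finrank ℝ E + σ) (μ.restrict (ball x₀ r)))
  set m := ENNReal.ofReal (|⨍ x in ball x₀ r, f x ∂μ| ^ p)
  have hθ : 0 ≤ θ := by positivity
  have hAX : (A / V) ^ θ ≤ X :=
    ENNReal.rpow_le_rpow (ENNReal.div_le_div_right (measure_mono inter_subset_left) _) hθ
  rcases le_or_gt (2 * A) V with hA | hA
  · calc _ ≤ 2 ^ (1 + θ) * (A / V) ^ θ * K :=
          (laverage_rpow_le_of_two_mul_measure_support_inter_ball_le hd hf (by linarith) hσ hr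
            hA).trans_eq (mul_assoc _ _ _)
      _ ≤ 2 ^ (1 + θ) * (X * K) := by rw [mul_assoc]; gcongr
      _ ≤ 2 ^ (1 + θ) * (X * K + m) := by gcongr; exact le_self_add
      _ ≤ _ := by gcongr; exact le_self_add
  · have hV0 : V ≠ 0 := (measure_ball_pos μ x₀ hr).ne'
    have hX : 1 ≤ (2 : ℝ≥0∞) ^ θ * X := by
      calc (1 : ℝ≥0∞) = 1 ^ θ := (ENNReal.one_rpow θ).symm
        _ ≤ (2 * A / V) ^ θ := by
            gcongr
            rw [ENNReal.le_div_iff_mul_le (Or.inl hV0) (Or.inl measure_ball_lt_top.ne), one_mul]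
            exact hA.le
        _ ≤ 2 ^ θ * X := by
            rw [mul_div_assoc, ENNReal.mul_rpow_of_nonneg _ _ hθ]
            gcongr
    have h2 : 1 ≤ (2 : ℝ≥0∞) ^ θ := by
      simpa using ENNReal.rpow_le_rpow (by norm_num : (1 : ℝ≥0∞) ≤ 2) hθ
    calc _ ≤ 2 ^ (p - 1) * (K + m) :=
          laverage_rpow_le_gagliardoEnergy_add hp (by positivity) hf hr
      _ ≤ 2 ^ (p - 1) * (2 ^ θ * X * K + 2 ^ θ * m) := by
          gcongr
          · exact le_mul_of_one_le_left zero_le hX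
          · exact le_mul_of_one_le_left zero_le h2
      _ = 2 ^ (p - 1) * 2 ^ θ * (X * K + m) := by ring
      _ ≤ _ := by gcongr; exact le_add_self

theorem exists_pos_laverage_rpow_div_le (hd : 0 < finrank ℝ E) {s p : ℝ} (hs : 0 ≤ s)
    (hp : 1 ≤ p) :
    ∃ c : ℝ, 0 < c ∧ ∀ (x₀ : E) (r : ℝ), 0 < r → ∀ f : E → ℝ, Measurable f →
      (μ (ball x₀ r))⁻¹ * ∫⁻ x in ball x₀ r, ENNReal.ofReal (|f x| ^ p / r ^ (s * p)) ∂μ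
        ≤ ENNReal.ofReal c *
            ((μ (Function.support f) / μ (ball x₀ r)) ^ (s * p / finrank ℝ E) *
              ((μ (ball x₀ r))⁻¹ *
                gagliardoEnergy f p (finrank ℝ E + s * p) (μ.restrict (ball x₀ r))))
          + ENNReal.ofReal c *
            ENNReal.ofReal (|⨍ x in ball x₀ r, f x ∂μ| ^ p / r ^ (s * p)) := by
  have hσ : 0 ≤ s * p := mul_nonneg hs (by linarith)
  set θ := s * p / finrank ℝ E
  set κ := ENNReal.ofReal (2 ^ ((finrank ℝ E : ℝ) + s * p)) / μ (ball (0 : E) 1)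
  set C₀ : ℝ≥0∞ := 2 ^ (1 + θ) + 2 ^ (p - 1) * 2 ^ θ
  have hκt : κ ≠ ∞ := ENNReal.div_ne_top ENNReal.ofReal_ne_top (measure_ball_pos μ 0 one_pos).ne'
  have hCt : C₀ * (κ + 1) ≠ ∞ := by finiteness
  refine ⟨(C₀ * (κ + 1)).toReal, ENNReal.toReal_pos (by positivity) hCt, fun x₀ r hr f hf ↦ ?_⟩
  rw [ENNReal.ofReal_toReal hCt]
  set V := μ (ball x₀ r)
  set X := (μ (Function.support f) / V) ^ θ
  set G := V⁻¹ * gagliardoEnergy f p (finrank ℝ E + s * p) (μ.restrict (ball x₀ r))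
  set m := ENNReal.ofReal (|⨍ x in ball x₀ r, f x ∂μ| ^ p)
  have hrσ : 0 < r ^ (s * p) := rpow_pos_of_pos hr _
  set R := ENNReal.ofReal (r ^ (s * p))
  have hR0 : R ≠ 0 := (ENNReal.ofReal_pos.2 hrσ).ne'
  have hR : ∀ a : ℝ, ENNReal.ofReal (a / r ^ (s * p)) = ENNReal.ofReal a * R⁻¹ :=
    fun a ↦ by rw [ENNReal.ofReal_div_of_pos hrσ, div_eq_mul_inv]
  have hmain := laverage_rpow_le_measure_support_div_rpow_mul_add hd hf hp hσ hr (μ := μ)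
    (x₀ := x₀)
  rw [ofReal_two_mul_rpow_mul_inv_measure_ball hr] at hmain
  calc V⁻¹ * ∫⁻ x in ball x₀ r, ENNReal.ofReal (|f x| ^ p / r ^ (s * p)) ∂μ
      = V⁻¹ * (∫⁻ x in ball x₀ r, ENNReal.ofReal (|f x| ^ p) ∂μ) * R⁻¹ := by
        simp_rw [hR]
        rw [lintegral_mul_const' _ _ (ENNReal.inv_ne_top.2 hR0), mul_assoc]
    _ ≤ C₀ * (X * (κ * R * G) + m) * R⁻¹ := by gcongr
    _ = C₀ * κ * (X * G) * (R * R⁻¹) + C₀ * (m * R⁻¹) := by ring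
    _ ≤ C₀ * (κ + 1) * (X * G) + C₀ * (κ + 1) * ENNReal.ofReal
          (|⨍ x in ball x₀ r, f x ∂μ| ^ p / r ^ (s * p)) := by
        rw [ENNReal.mul_inv_cancel hR0 ENNReal.ofReal_ne_top, mul_one, hR]
        gcongr
        · exact le_self_add
        · exact le_mul_of_one_le_right zero_le le_add_self

end AddHaar

theorem stmt_19_general (n : ℕ) (s p : ℝ) (hs : 0 < s) (hp : 1 ≤ p)
    (hsp : s * p ≤ n) :
    ∃ c : ℝ, 0 < c ∧ ∀ (x₀ : EuclideanSpace ℝ (Fin n)) (r : ℝ), 0 < r →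
      ∀ f : EuclideanSpace ℝ (Fin n) → ℝ, Measurable f →
        (volume (Metric.ball x₀ r))⁻¹ *
            ∫⁻ x in Metric.ball x₀ r, ENNReal.ofReal (|f x| ^ p / r ^ (s * p))
          ≤ ENNReal.ofReal c *
              ((volume (Function.support f) / volume (Metric.ball x₀ r)) ^ (s * p / n) *
                ((volume (Metric.ball x₀ r))⁻¹ *
                  ∫⁻ x in Metric.ball x₀ r, ∫⁻ y in Metric.ball x₀ r,
                    ENNReal.ofReal (|f x - f y| ^ p / ‖x - y‖ ^ ((n : ℝ) + s * p))))
            + ENNReal.ofReal c *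
              ENNReal.ofReal (|⨍ x in Metric.ball x₀ r, f x| ^ p / r ^ (s * p)) := by
  have hn : (0 : ℝ) < n := (mul_pos hs (by linarith)).trans_le hsp
  have h := exists_pos_laverage_rpow_div_le (μ := volume)
    (by rw [finrank_euclideanSpace_fin]; exact_mod_cast hn) hs.le hp
  simpa only [finrank_euclideanSpace_fin, gagliardoEnergy] using h

theorem stmt_19 (n : ℕ) (s p : ℝ) (hs : 0 < s) (hs1 : s < 1) (hp : 1 ≤ p)
    (hsp : s * p ≤ n) :
    ∃ c : ℝ, 0 < c ∧ ∀ (x₀ : EuclideanSpace ℝ (Fin n)) (r : ℝ), 0 < r →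
      ∀ f : EuclideanSpace ℝ (Fin n) → ℝ, Measurable f →
        (volume (Metric.ball x₀ r))⁻¹ *
            ∫⁻ x in Metric.ball x₀ r, ENNReal.ofReal (|f x| ^ p / r ^ (s * p))
          ≤ ENNReal.ofReal c *
              ((volume (Function.support f) / volume (Metric.ball x₀ r)) ^ (s * p / n) *
                ((volume (Metric.ball x₀ r))⁻¹ *
                  ∫⁻ x in Metric.ball x₀ r, ∫⁻ y in Metric.ball x₀ r,
                    ENNReal.ofReal (|f x - f y| ^ p / ‖x - y‖ ^ ((n : ℝ) + s * p))))
            + ENNReal.ofReal c *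
              ENNReal.ofReal (|⨍ x in Metric.ball x₀ r, f x| ^ p / r ^ (s * p)) :=
  stmt_19_general n s p hs hp hsp
end
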